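/- Let p(s) = Σ_{k=0}^{m} a_k s^k be a symmetric trapezoidal polynomial with all a_k > 0 whose stable part has length l ≥ n, and let [n] = 1 + s + ... + s^{n−1} with m ≥ n. Then p(s)·[n] is a symmetric trapezoidal polynomial whose stable part has length l − n + 1. -/

import Mathlib

open Polynomial

/-- `qpoly n = 1 + s + ⋯ + s^(n-1)`, denoted `[n]` in the paper. -/
noncomputable def qpoly (n : ℕ) : Polynomial ℝ :=
  ∑ i ∈ Finset.range n, Polynomial.X ^ i

/-- All coefficients of `p` over its support `0, …, natDegree p` are positive. -/
def PosCoeffs (p : Polynomial ℝ) : Prop :=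
  ∀ k ≤ p.natDegree, 0 < p.coeff k

/-- `p` is symmetric: its coefficient sequence over its support reads the same
forwards and backwards. -/
def SymmetricPoly (p : Polynomial ℝ) : Prop :=
  ∀ k ≤ p.natDegree, p.coeff k = p.coeff (p.natDegree - k)

/-- `p` is trapezoidal: its coefficients strictly increase, then are constant,
then strictly decrease. -/
def Trapezoidal (p : Polynomial ℝ) : Prop :=
  ∃ i j : ℕ, i ≤ j ∧ j ≤ p.natDegree ∧
    (∀ k, k < i → p.coeff k < p.coeff (k + 1)) ∧
    (∀ k, i ≤ k → k < j → p.coeff k = p.coeff (k + 1)) ∧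
    (∀ k, j ≤ k → k < p.natDegree → p.coeff (k + 1) < p.coeff k)

/-- `p` has a run of `l + 1` equal consecutive coefficients within its support. -/
def HasRun (p : Polynomial ℝ) (l : ℕ) : Prop :=
  ∃ k0 : ℕ, k0 + l ≤ p.natDegree ∧ ∀ i ≤ l, p.coeff (k0 + i) = p.coeff k0

/-- The stable part of `p` has length `l`: `l` is the largest integer such that
some `l + 1` consecutive coefficients of `p` are all equal. -/
def StableLength (p : Polynomial ℝ) (l : ℕ) : Prop :=
  HasRun p l ∧ ∀ l', HasRun p l' → l' ≤ l

lemma qpoly_coeff (n k : ℕ) : (qpoly n).coeff k = if k < n then 1 else 0 := by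
  rw [qpoly, finset_sum_coeff]
  simp [coeff_X_pow, Finset.sum_ite_eq, Finset.mem_range]

lemma qpoly_natDegree (n : ℕ) (hn : 1 ≤ n) : (qpoly n).natDegree = n - 1 := by
  apply le_antisymm
  · apply natDegree_le_iff_coeff_eq_zero.mpr
    intro k hk
    rw [qpoly_coeff]
    simp [Nat.not_lt.mpr (by omega : n ≤ k)]
  · apply le_natDegree_of_ne_zero
    rw [qpoly_coeff]
    simp [(by omega : n - 1 < n)]

lemma qpoly_step (p : Polynomial ℝ) (n k : ℕ) :
    (p * qpoly n).coeff (k + 1) =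
      (p * qpoly n).coeff k + p.coeff (k + 1) -
        (if n ≤ k + 1 then p.coeff (k + 1 - n) else 0) := by
  have h : p * qpoly n * (X - 1) = p * X ^ n - p := by
    rw [mul_assoc, qpoly, geom_sum_mul, mul_sub, mul_one]
  have h2 := congrArg (fun q => Polynomial.coeff q (k + 1)) h
  simp only [mul_sub, mul_one, coeff_sub, coeff_mul_X, coeff_mul_X_pow'] at h2
  by_cases hc : n ≤ k + 1 <;> simp only [hc, if_true, if_false] at h2 ⊢ <;> linarith

lemma mono_up (f : ℕ → ℝ) (i j : ℕ)
    (h1 : ∀ k, k < i → f k < f (k + 1))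
    (h2 : ∀ k, i ≤ k → k < j → f k = f (k + 1)) :
    ∀ u v, u ≤ v → v ≤ j → f u ≤ f v := by
  intro u v huv hvj
  induction v, huv using Nat.le_induction with
  | base => exact le_rfl
  | succ v hv ih =>
    have h := ih (by omega)
    rcases lt_or_ge v i with h' | h'
    · linarith [h1 v h']
    · linarith [(h2 v h' (by omega)).le]

lemma mono_up_strict (f : ℕ → ℝ) (i j : ℕ)
    (h1 : ∀ k, k < i → f k < f (k + 1))
    (h2 : ∀ k, i ≤ k → k < j → f k = f (k + 1)) :
    ∀ u v, u < i → u < v → v ≤ j → f u < f v := by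
  intro u v hui huv hvj
  have h := h1 u hui
  have h' := mono_up f i j h1 h2 (u + 1) v (by omega) hvj
  linarith

lemma mono_down (f : ℕ → ℝ) (i j N : ℕ)
    (h2 : ∀ k, i ≤ k → k < j → f k = f (k + 1))
    (h3 : ∀ k, j ≤ k → k < N → f (k + 1) < f k) :
    ∀ u v, i ≤ u → u ≤ v → v ≤ N → f v ≤ f u := by
  intro u v hiu huv hvN
  induction v, huv using Nat.le_induction with
  | base => exact le_rfl
  | succ v hv ih =>
    have h := ih (by omega)
    rcases lt_or_ge v j with h' | h'
    · linarith [(h2 v (by omega) h').symm.le]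
    · linarith [h3 v h' (by omega)]

lemma mono_down_strict (f : ℕ → ℝ) (i j N : ℕ)
    (h2 : ∀ k, i ≤ k → k < j → f k = f (k + 1))
    (h3 : ∀ k, j ≤ k → k < N → f (k + 1) < f k) :
    ∀ u v, i ≤ u → u < v → j < v → v ≤ N → f v < f u := by
  intro u v hiu huv hjv hvN
  obtain ⟨w, rfl⟩ : ∃ w, v = w + 1 := ⟨v - 1, by omega⟩
  have h := h3 w (by omega) (by omega)
  have h' := mono_down f i j N h2 h3 u w hiu (by omega) (by omega)
  linarith

lemma plateau_eq (f : ℕ → ℝ) (i j : ℕ)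
    (h2 : ∀ k, i ≤ k → k < j → f k = f (k + 1)) :
    ∀ u v, i ≤ u → u ≤ v → v ≤ j → f u = f v := by
  intro u v hiu huv hvj
  induction v, huv using Nat.le_induction with
  | base => rfl
  | succ v hv ih => rw [ih (by omega), h2 v (by omega) (by omega)]

theorem stableLength_mul_qpoly_of_le (p : Polynomial ℝ) (m n l : ℕ)
    (hdeg : p.natDegree = m) (hn : 1 ≤ n) (hmn : n ≤ m) (hln : n ≤ l)
    (hpos : PosCoeffs p) (hsym : SymmetricPoly p) (htrap : Trapezoidal p)
    (hlen : StableLength p l) :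
    SymmetricPoly (p * qpoly n) ∧ Trapezoidal (p * qpoly n) ∧
      StableLength (p * qpoly n) (l - n + 1) := by
  have hpos' : ∀ k ≤ m, 0 < p.coeff k := fun k hk => hpos k (by rw [hdeg]; exact hk)
  have hzero : ∀ k, m < k → p.coeff k = 0 := fun k hk =>
    coeff_eq_zero_of_natDegree_lt (by rw [hdeg]; exact hk)
  have hp0 : p ≠ 0 := by
    intro h
    have := hpos' 0 (by omega)
    rw [h] at this
    simp at this
  have hq0 : qpoly n ≠ 0 := by
    intro h
    have := qpoly_coeff n 0
    rw [h] at this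
    rw [if_pos (by omega : 0 < n)] at this
    exact one_ne_zero this.symm
  have hM : (p * qpoly n).natDegree = m + n - 1 := by
    rw [natDegree_mul hp0 hq0, hdeg, qpoly_natDegree n hn]; omega
  -- Symmetry
  have hrevp : p.reverse = p := by
    ext k
    rw [coeff_reverse]
    rcases le_or_gt k p.natDegree with h | h
    · rw [revAt_le h]; exact (hsym k h).symm
    · rw [revAt_eq_self_of_lt h]
  have hrevq : (qpoly n).reverse = qpoly n := by
    ext k
    rw [coeff_reverse, qpoly_natDegree n hn]
    rcases le_or_gt k (n - 1) with h | h
    · rw [revAt_le h, qpoly_coeff, qpoly_coeff,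
        if_pos (by omega : n - 1 - k < n), if_pos (by omega : k < n)]
    · rw [revAt_eq_self_of_lt h]
  have hrev : (p * qpoly n).reverse = p * qpoly n := by
    rw [Polynomial.reverse_mul (by
      simp only [Ne, mul_eq_zero, leadingCoeff_eq_zero]
      tauto), hrevp, hrevq]
  have hsymP : SymmetricPoly (p * qpoly n) := by
    intro k hk
    have h := congrArg (fun q => Polynomial.coeff q k) hrev
    rw [coeff_reverse, revAt_le hk] at h
    exact h.symm
  -- Trapezoidal structure of p
  obtain ⟨i, j, hij, hjm, h1, h2, h3⟩ := htrap
  rw [hdeg] at hjm h3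
  have hl1 : 1 ≤ l := by omega
  -- j = i + l
  have hrun_ij : HasRun p (j - i) := by
    refine ⟨i, by omega, fun t ht => ?_⟩
    exact (plateau_eq p.coeff i j h2 i (i + t) le_rfl (by omega) (by omega)).symm
  have hji1 : j - i ≤ l := hlen.2 _ hrun_ij
  obtain ⟨k0, hk0, hall⟩ := hlen.1
  rw [hdeg] at hk0
  have hik0 : i ≤ k0 := by
    by_contra h
    have hs := h1 k0 (by omega)
    have he := hall 1 (by omega)
    linarith
  have hk0j : k0 + l ≤ j := by
    by_contra h
    have hs := h3 (k0 + l - 1) (by omega) (by omega)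
    have e1 := hall (l - 1) (by omega)
    have e2 := hall l le_rfl
    rw [(by omega : k0 + (l - 1) = k0 + l - 1)] at e1
    rw [(by omega : k0 + l - 1 + 1 = k0 + l)] at hs
    linarith
  have hjil : j = i + l := by omega
  -- step classification for the product
  have hup : ∀ k, k < i + n - 1 →
      (p * qpoly n).coeff k < (p * qpoly n).coeff (k + 1) := by
    intro k hk
    have hs := qpoly_step p n k
    by_cases hc : n ≤ k + 1
    · rw [if_pos hc] at hs
      have hm := mono_up_strict p.coeff i j h1 h2 (k + 1 - n) (k + 1)
        (by omega) (by omega) (by omega)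
      linarith
    · rw [if_neg hc] at hs
      have hpc := hpos' (k + 1) (by omega)
      linarith
  have heqz : ∀ k, i + n - 1 ≤ k → k < j →
      (p * qpoly n).coeff k = (p * qpoly n).coeff (k + 1) := by
    intro k hk1 hk2
    have hs := qpoly_step p n k
    rw [if_pos (by omega : n ≤ k + 1)] at hs
    have hm := plateau_eq p.coeff i j h2 (k + 1 - n) (k + 1)
      (by omega) (by omega) (by omega)
    linarith
  have hdn : ∀ k, j ≤ k → k < m + n - 1 →
      (p * qpoly n).coeff (k + 1) < (p * qpoly n).coeff k := by
    intro k hk1 hk2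
    have hs := qpoly_step p n k
    rw [if_pos (by omega : n ≤ k + 1)] at hs
    rcases le_or_gt (k + 1) m with h | h
    · have hm := mono_down_strict p.coeff i j m h2 h3 (k + 1 - n) (k + 1)
        (by omega) (by omega) (by omega) h
      linarith
    · have h0 : p.coeff (k + 1) = 0 := hzero _ (by omega)
      have hpc := hpos' (k + 1 - n) (by omega)
      linarith
  refine ⟨hsymP, ⟨i + n - 1, j, by omega, by omega, hup, heqz,
    fun k hk1 hk2 => hdn k hk1 (by omega)⟩, ?_, ?_⟩
  · -- HasRun (l - n + 1)
    refine ⟨i + n - 1, by omega, fun t ht => ?_⟩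
    exact (plateau_eq (fun k => (p * qpoly n).coeff k) (i + n - 1) j heqz
      (i + n - 1) (i + n - 1 + t) le_rfl (by omega) (by omega)).symm
  · -- maximality
    rintro l' ⟨k0', hk0', hall'⟩
    rw [hM] at hk0'
    rcases Nat.eq_zero_or_pos l' with rfl | hl'
    · omega
    have hzone : ∀ t, t < l' → i + n - 1 ≤ k0' + t ∧ k0' + t < j := by
      intro t ht
      have e1 := hall' t (by omega)
      have e2 := hall' (t + 1) (by omega)
      rw [(by omega : k0' + (t + 1) = k0' + t + 1)] at e2
      constructor
      · by_contra h
        have := hup (k0' + t) (by omega)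
        linarith
      · by_contra h
        have := hdn (k0' + t) (by omega) (by omega)
        linarith
    have hz0 := hzone 0 hl'
    have hz1 := hzone (l' - 1) (by omega)
    omega
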